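/- Suppose Assumption 1 (full rank) and Assumption 2 (no separation) both hold. Then there exists β̂ ∈ ℝ^p such that log L(β̂) ≥ log L(β) for all β ∈ ℝ^p, and any β̃ ∈ ℝ^p with log L(β̃) = log L(β̂) equals β̂. (Sufficiency direction of Theorem 1.) -/

import Mathlib

open scoped BigOperators RealInnerProductSpace

noncomputable section

/-- Real value of a binary indicator. -/
def bval (b : Bool) : ℝ := if b then 1 else 0

/-- The alternative set `B_i = {d ∈ {0,1}^T : ∑_t d_t = ∑_t Y_{it}}`. -/
def altSet (T : ℕ) (Yi : Fin T → Bool) : Finset (Fin T → Bool) :=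
  Finset.univ.filter fun d => (∑ t, (d t).toNat) = ∑ t, (Yi t).toNat

/-- The conditional log-likelihood `log L(β)`. -/
def logL {n T p : ℕ} (X : Fin n → Fin T → EuclideanSpace ℝ (Fin p))
    (Y : Fin n → Fin T → Bool) (β : EuclideanSpace ℝ (Fin p)) : ℝ :=
  ∑ i, ((∑ t, bval (Y i t) * ⟪X i t, β⟫) -
    Real.log (∑ d ∈ altSet T (Y i), Real.exp (∑ t, bval (d t) * ⟪X i t, β⟫)))

/-- The conditional-logit (softmax) weights `w_i(d; β)`. -/
def cweight {n T p : ℕ} (X : Fin n → Fin T → EuclideanSpace ℝ (Fin p))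
    (Y : Fin n → Fin T → Bool) (i : Fin n) (d : Fin T → Bool)
    (β : EuclideanSpace ℝ (Fin p)) : ℝ :=
  Real.exp (∑ t, bval (d t) * ⟪X i t, β⟫) /
    ∑ f ∈ altSet T (Y i), Real.exp (∑ t, bval (f t) * ⟪X i t, β⟫)

/-- Row index set of the matrix in Assumption 1: pairs `(i, d)` with `d ∈ B_i`. -/
abbrev RowIdx (n T : ℕ) (Y : Fin n → Fin T → Bool) :=
  (i : Fin n) × {d : Fin T → Bool // d ∈ altSet T (Y i)}

/-- The matrix of Assumption 1, evaluated at `β`. -/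
def rowMat {n T p : ℕ} (X : Fin n → Fin T → EuclideanSpace ℝ (Fin p))
    (Y : Fin n → Fin T → Bool) (β : EuclideanSpace ℝ (Fin p)) :
    Matrix (RowIdx n T Y) (Fin p) ℝ :=
  fun r k =>
    (∑ t, bval (r.2.1 t) * X r.1 t k) -
      ∑ e ∈ altSet T (Y r.1),
        cweight X Y r.1 e β * ∑ t, bval (e t) * X r.1 t k

/-- Assumption 1 (full rank). -/
def Assumption1 {n T p : ℕ} (X : Fin n → Fin T → EuclideanSpace ℝ (Fin p))
    (Y : Fin n → Fin T → Bool) : Prop :=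
  ∀ β : EuclideanSpace ℝ (Fin p), (rowMat X Y β).rank = p

/-- Assumption 2 (no separation). -/
def Assumption2 {n T p : ℕ} (X : Fin n → Fin T → EuclideanSpace ℝ (Fin p))
    (Y : Fin n → Fin T → Bool) : Prop :=
  ¬ ∃ βstar : EuclideanSpace ℝ (Fin p), βstar ≠ 0 ∧
      ∀ i, ∀ d ∈ altSet T (Y i),
        0 ≤ ∑ t, (bval (d t) - bval (Y i t)) * ⟪X i t, βstar⟫

/-- The vectors `v_{i,d} = ∑_t (d_t − Y_{it}) X_{it}`. -/
def vvec {n T p : ℕ} (X : Fin n → Fin T → EuclideanSpace ℝ (Fin p))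
    (Y : Fin n → Fin T → Bool) (i : Fin n) (d : Fin T → Bool) :
    EuclideanSpace ℝ (Fin p) :=
  ∑ t, (bval (d t) - bval (Y i t)) • X i t

/-!
Write `v_{i,d} = ∑_t (d_t - Y_{it}) X_{it}`. Then `-log L(β) = ∑_i log ∑_{d ∈ B_i} exp ⟪v_{i,d}, β⟫`,
a sum of log-sum-exp functions in which the observed choice `d = Y_i` contributes `exp 0 = 1`.
Each summand is therefore at least `max (⟪v_{i,d}, β⟫, 0)`; no separation makes the sum of these
positive parts a positively homogeneous function that is positive off `0`, hence bounded below by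
`c ‖β‖`, so `-log L` is coercive and has a minimiser. By Cauchy-Schwarz log-sum-exp is midpoint
convex, with equality only when the two exponent vectors differ by a constant; since `v_{i,Y_i} = 0`
that constant vanishes, so two minimisers `b, b'` satisfy `⟪v_{i,d}, b' - b⟫ = 0` for all `i, d`.
These say that `b' - b` lies in the kernel of the matrix of Assumption 1, which is trivial.
-/

open Finset
open scoped Matrix

theorem Finset.exists_eq_const_mul_of_sum_mul_sq_eq {ι : Type*} (s : Finset ι) (f g : ι → ℝ)
    (hf : ∑ i ∈ s, f i ^ 2 ≠ 0)
    (h : (∑ i ∈ s, f i * g i) ^ 2 = (∑ i ∈ s, f i ^ 2) * ∑ i ∈ s, g i ^ 2) :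
    ∃ t, ∀ i ∈ s, g i = t * f i := by
  set t := (∑ i ∈ s, f i * g i) / ∑ i ∈ s, f i ^ 2
  have hzero : ∑ i ∈ s, (g i - t * f i) ^ 2 = 0 := by
    have hexpand : ∀ i ∈ s,
        (g i - t * f i) ^ 2 = g i ^ 2 - 2 * t * (f i * g i) + t ^ 2 * f i ^ 2 :=
      fun i _ => by ring
    rw [sum_congr rfl hexpand, sum_add_distrib, sum_sub_distrib, ← mul_sum, ← mul_sum]
    simp only [t]
    field_simp
    linarith [h]
  refine ⟨t, fun i hi => ?_⟩
  have := (sum_eq_zero_iff_of_nonneg fun i _ => sq_nonneg (g i - t * f i)).1 hzero i hi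
  linarith [pow_eq_zero_iff (n := 2) two_ne_zero |>.1 this]

theorem Matrix.mulVec_injective_of_rank_eq_card {m n K : Type*} [Fintype m] [Fintype n]
    [Field K] (A : Matrix m n K) (h : A.rank = Fintype.card n) : Function.Injective A.mulVec := by
  have hdim := LinearMap.finrank_range_add_finrank_ker A.mulVecLin
  rw [← Matrix.rank, h, Module.finrank_fintype_fun_eq_card, add_eq_left,
    Submodule.finrank_eq_zero] at hdim
  exact LinearMap.ker_eq_bot.1 hdim

theorem exists_pos_mul_norm_le_of_homogeneous {E : Type*} [NormedAddCommGroup E]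
    [NormedSpace ℝ E] [ProperSpace E] {f : E → ℝ} (hf : Continuous f)
    (hsmul : ∀ r : ℝ, 0 ≤ r → ∀ x, f (r • x) = r * f x) (hpos : ∀ x, x ≠ 0 → 0 < f x) :
    ∃ c > 0, ∀ x, c * ‖x‖ ≤ f x := by
  obtain ⟨c, hc, hsphere⟩ : ∃ c > 0, ∀ u ∈ Metric.sphere (0 : E) 1, c ≤ f u := by
    rcases (Metric.sphere (0 : E) 1).eq_empty_or_nonempty with h | h
    · exact ⟨1, one_pos, by simp [h]⟩
    · obtain ⟨u, hu, hmin⟩ := (isCompact_sphere (0 : E) 1).exists_isMinOn h hf.continuousOn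
      exact ⟨f u, hpos u (ne_zero_of_mem_unit_sphere ⟨u, hu⟩), hmin⟩
  refine ⟨c, hc, fun x => ?_⟩
  rcases eq_or_ne x 0 with rfl | hx
  · simp [show f 0 = 0 by simpa using hsmul 0 le_rfl 0]
  · have hnorm : 0 < ‖x‖ := norm_pos_iff.2 hx
    have := hsphere (‖x‖⁻¹ • x) (by simp [norm_smul, hnorm.ne'])
    rw [hsmul _ (inv_nonneg.2 hnorm.le)] at this
    calc c * ‖x‖ ≤ ‖x‖⁻¹ * f x * ‖x‖ := by gcongr
      _ = f x := by field_simp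

theorem Real.exp_half_sq (z : ℝ) : Real.exp (z / 2) ^ 2 = Real.exp z := by
  rw [sq, ← Real.exp_add, add_halves]

section LogSumExp

variable {α : Type*} (s : Finset α)

def logSumExp (x : α → ℝ) : ℝ := Real.log (∑ d ∈ s, Real.exp (x d))

variable {s}

theorem le_logSumExp (x : α → ℝ) {d : α} (hd : d ∈ s) : x d ≤ logSumExp s x := by
  rw [logSumExp, Real.le_log_iff_exp_le (sum_pos (fun e _ => Real.exp_pos _) ⟨d, hd⟩)]
  exact single_le_sum (fun e _ => (Real.exp_pos (x e)).le) hd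

theorem sq_sum_exp_midpoint_le (x y : α → ℝ) :
    (∑ d ∈ s, Real.exp ((x d + y d) / 2)) ^ 2
      ≤ (∑ d ∈ s, Real.exp (x d)) * ∑ d ∈ s, Real.exp (y d) := by
  simpa only [← Real.exp_add, ← add_div, Real.exp_half_sq] using
    sum_mul_sq_le_sq_mul_sq s (fun d => Real.exp (x d / 2)) (fun d => Real.exp (y d / 2))

theorem logSumExp_midpoint_le (hs : s.Nonempty) (x y : α → ℝ) :
    logSumExp s (fun d => (x d + y d) / 2) ≤ (logSumExp s x + logSumExp s y) / 2 := by
  have hpos (z : α → ℝ) : 0 < ∑ d ∈ s, Real.exp (z d) :=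
    sum_pos (fun d _ => Real.exp_pos _) hs
  have := Real.log_le_log (pow_pos (hpos _) 2) (sq_sum_exp_midpoint_le x y)
  rw [Real.log_pow, Real.log_mul (hpos x).ne' (hpos y).ne'] at this
  unfold logSumExp
  push_cast at this
  linarith

theorem logSumExp_sub_const (hs : s.Nonempty) (x : α → ℝ) (c : ℝ) :
    logSumExp s (fun d => x d - c) = logSumExp s x - c := by
  simp only [logSumExp, Real.exp_sub, ← sum_div]
  rw [Real.log_div (sum_pos (fun d _ => Real.exp_pos _) hs).ne' (Real.exp_pos c).ne',
    Real.log_exp]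

theorem exists_eq_add_const_of_logSumExp_midpoint_eq (hs : s.Nonempty) {x y : α → ℝ}
    (h : logSumExp s (fun d => (x d + y d) / 2) = (logSumExp s x + logSumExp s y) / 2) :
    ∃ c, ∀ d ∈ s, y d = x d + c := by
  have hpos (z : α → ℝ) : 0 < ∑ d ∈ s, Real.exp (z d) :=
    sum_pos (fun d _ => Real.exp_pos _) hs
  have hsq : (∑ d ∈ s, Real.exp ((x d + y d) / 2)) ^ 2
      = (∑ d ∈ s, Real.exp (x d)) * ∑ d ∈ s, Real.exp (y d) := by
    refine Real.log_injOn_pos (pow_pos (hpos _) 2) (mul_pos (hpos x) (hpos y)) ?_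
    rw [Real.log_pow, Real.log_mul (hpos x).ne' (hpos y).ne']
    unfold logSumExp at h
    push_cast
    linarith
  obtain ⟨t, ht⟩ := s.exists_eq_const_mul_of_sum_mul_sq_eq
    (fun d => Real.exp (x d / 2)) (fun d => Real.exp (y d / 2))
    (by simpa only [Real.exp_half_sq] using (hpos x).ne')
    (by simpa only [← Real.exp_add, ← add_div, Real.exp_half_sq] using hsq)
  obtain ⟨d₀, hd₀⟩ := hs
  refine ⟨y d₀ - x d₀, fun d hd => ?_⟩
  have : Real.exp (y d / 2) * Real.exp (x d₀ / 2)
      = Real.exp (y d₀ / 2) * Real.exp (x d / 2) := by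
    rw [ht d hd, ht d₀ hd₀]; ring
  rw [← Real.exp_add, ← Real.exp_add] at this
  linarith [Real.exp_injective this]

theorem continuous_logSumExp_inner {E : Type*} [NormedAddCommGroup E] [InnerProductSpace ℝ E]
    (hs : s.Nonempty) (v : α → E) :
    Continuous fun β : E => logSumExp s fun d => ⟪v d, β⟫ :=
  (continuous_finsetSum _ fun _ _ => (continuous_const.inner continuous_id).rexp).log
    fun _ => (sum_pos (fun _ _ => Real.exp_pos _) hs).ne'

variable {E : Type*} [NormedAddCommGroup E] [InnerProductSpace ℝ E]

theorem logSumExp_inner_midpoint_le (hs : s.Nonempty) (v : α → E) (b b' : E) :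
    (logSumExp s fun d => ⟪v d, (2⁻¹ : ℝ) • (b + b')⟫)
      ≤ ((logSumExp s fun d => ⟪v d, b⟫) + logSumExp s fun d => ⟪v d, b'⟫) / 2 := by
  simpa only [real_inner_smul_right, inner_add_right, inv_mul_eq_div] using
    logSumExp_midpoint_le hs (fun d => ⟪v d, b⟫) (fun d => ⟪v d, b'⟫)

theorem exists_inner_sub_eq_const_of_logSumExp_inner_midpoint_eq (hs : s.Nonempty) (v : α → E)
    {b b' : E} (h : (logSumExp s fun d => ⟪v d, (2⁻¹ : ℝ) • (b + b')⟫)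
      = ((logSumExp s fun d => ⟪v d, b⟫) + logSumExp s fun d => ⟪v d, b'⟫) / 2) :
    ∃ c, ∀ d ∈ s, ⟪v d, b' - b⟫ = c := by
  simp only [real_inner_smul_right, inner_add_right, inv_mul_eq_div] at h
  obtain ⟨c, hc⟩ := exists_eq_add_const_of_logSumExp_midpoint_eq hs h
  exact ⟨c, fun d hd => by rw [inner_sub_right, hc d hd]; ring⟩

end LogSumExp

section ConditionalLogit

variable {n T p : ℕ} (X : Fin n → Fin T → EuclideanSpace ℝ (Fin p)) (Y : Fin n → Fin T → Bool)

theorem self_mem_altSet (Yi : Fin T → Bool) : Yi ∈ altSet T Yi := by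
  simp [altSet]

theorem altSet_nonempty (Yi : Fin T → Bool) : (altSet T Yi).Nonempty :=
  ⟨Yi, self_mem_altSet Yi⟩

theorem vvec_self (i : Fin n) : vvec X Y i (Y i) = 0 := by
  simp [vvec]

theorem inner_vvec (i : Fin n) (d : Fin T → Bool) (β : EuclideanSpace ℝ (Fin p)) :
    ⟪vvec X Y i d, β⟫ = ∑ t, (bval (d t) - bval (Y i t)) * ⟪X i t, β⟫ := by
  simp only [vvec, sum_inner, real_inner_smul_left]

def negLogL (β : EuclideanSpace ℝ (Fin p)) : ℝ :=
  ∑ i, logSumExp (altSet T (Y i)) fun d => ⟪vvec X Y i d, β⟫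

theorem logL_eq_neg_negLogL (β : EuclideanSpace ℝ (Fin p)) : logL X Y β = -negLogL X Y β := by
  have hsplit (i : Fin n) (d : Fin T → Bool) : ⟪vvec X Y i d, β⟫
      = ∑ t, bval (d t) * ⟪X i t, β⟫ - ∑ t, bval (Y i t) * ⟪X i t, β⟫ := by
    simp only [inner_vvec, sub_mul, sum_sub_distrib]
  simp only [negLogL, hsplit, logSumExp_sub_const (altSet_nonempty _), ← sum_neg_distrib]
  exact sum_congr rfl fun i _ => by rw [logSumExp]; ring

theorem continuous_negLogL : Continuous (negLogL X Y) :=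
  continuous_finsetSum _ fun i _ => continuous_logSumExp_inner (altSet_nonempty (Y i)) _

theorem exists_inner_vvec_pos (h2 : Assumption2 X Y) {u : EuclideanSpace ℝ (Fin p)}
    (hu : u ≠ 0) : ∃ i, ∃ d ∈ altSet T (Y i), 0 < ⟪vvec X Y i d, u⟫ := by
  by_contra! h
  refine h2 ⟨-u, neg_ne_zero.2 hu, fun i d hd => ?_⟩
  rw [← inner_vvec, inner_neg_right, neg_nonneg]
  exact h i d hd

def hingeSum (β : EuclideanSpace ℝ (Fin p)) : ℝ :=
  ∑ i, ∑ d ∈ altSet T (Y i), max ⟪vvec X Y i d, β⟫ 0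

theorem continuous_hingeSum : Continuous (hingeSum X Y) :=
  continuous_finsetSum _ fun _ _ => continuous_finsetSum _ fun _ _ =>
    (continuous_const.inner continuous_id).max continuous_const

theorem hingeSum_smul {r : ℝ} (hr : 0 ≤ r) (β : EuclideanSpace ℝ (Fin p)) :
    hingeSum X Y (r • β) = r * hingeSum X Y β := by
  simp only [hingeSum, real_inner_smul_right, mul_sum, mul_max_of_nonneg _ _ hr, mul_zero]

theorem hingeSum_pos (h2 : Assumption2 X Y) {u : EuclideanSpace ℝ (Fin p)} (hu : u ≠ 0) :
    0 < hingeSum X Y u := by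
  obtain ⟨i, d, hd, hpos⟩ := exists_inner_vvec_pos X Y h2 hu
  exact sum_pos' (fun j _ => sum_nonneg fun e _ => le_max_right _ _) ⟨i, mem_univ i,
    sum_pos' (fun e _ => le_max_right _ _) ⟨d, hd, lt_max_of_lt_left hpos⟩⟩

theorem hingeSum_le (β : EuclideanSpace ℝ (Fin p)) :
    hingeSum X Y β ≤ Fintype.card (Fin T → Bool) * negLogL X Y β := by
  rw [negLogL, mul_sum]
  refine sum_le_sum fun i _ => ?_
  have hlse : ∀ d ∈ altSet T (Y i),
      ⟪vvec X Y i d, β⟫ ≤ logSumExp (altSet T (Y i)) fun d => ⟪vvec X Y i d, β⟫ :=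
    fun d hd => le_logSumExp (fun d => ⟪vvec X Y i d, β⟫) hd
  have hnonneg : 0 ≤ logSumExp (altSet T (Y i)) fun d => ⟪vvec X Y i d, β⟫ := by
    simpa [vvec_self] using hlse _ (self_mem_altSet (Y i))
  calc ∑ d ∈ altSet T (Y i), max ⟪vvec X Y i d, β⟫ 0
      ≤ (altSet T (Y i)).card • logSumExp (altSet T (Y i)) fun d => ⟪vvec X Y i d, β⟫ :=
        sum_le_card_nsmul _ _ _ fun d hd => max_le (hlse d hd) hnonneg
    _ ≤ _ := by
        rw [nsmul_eq_mul]
        gcongr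
        exact_mod_cast card_le_univ _

theorem exists_forall_negLogL_le (h2 : Assumption2 X Y) :
    ∃ b, ∀ β, negLogL X Y b ≤ negLogL X Y β := by
  obtain ⟨c, hc, hcoer⟩ := exists_pos_mul_norm_le_of_homogeneous (continuous_hingeSum X Y)
    (fun r hr => hingeSum_smul X Y hr) (fun u hu => hingeSum_pos X Y h2 hu)
  have hcard : (0 : ℝ) < Fintype.card (Fin T → Bool) := by exact_mod_cast Fintype.card_pos
  refine (continuous_negLogL X Y).exists_forall_le (Filter.tendsto_atTop_mono (fun β => ?_)
    ((tendsto_norm_cocompact_atTop).const_mul_atTop (div_pos hc hcard)))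
  rw [div_mul_eq_mul_div, div_le_iff₀' hcard]
  exact (hcoer β).trans (hingeSum_le X Y β)

def covSum (i : Fin n) (d : Fin T → Bool) : EuclideanSpace ℝ (Fin p) :=
  ∑ t, bval (d t) • X i t

theorem vvec_eq_sub (i : Fin n) (d : Fin T → Bool) :
    vvec X Y i d = covSum X i d - covSum X i (Y i) := by
  simp only [vvec, covSum, sub_smul, sum_sub_distrib]

theorem sum_cweight (i : Fin n) (β : EuclideanSpace ℝ (Fin p)) :
    ∑ e ∈ altSet T (Y i), cweight X Y i e β = 1 := by
  simp only [cweight, ← sum_div]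
  exact div_self (sum_pos (fun _ _ => Real.exp_pos _) (altSet_nonempty (Y i))).ne'

theorem rowMat_mulVec_apply (β u : EuclideanSpace ℝ (Fin p)) (r : RowIdx n T Y) :
    (rowMat X Y β *ᵥ WithLp.ofLp u) r =
      ⟪covSum X r.1 r.2.1 - ∑ e ∈ altSet T (Y r.1), cweight X Y r.1 e β • covSum X r.1 e,
        u⟫ := by
  rw [real_inner_comm, EuclideanSpace.inner_eq_star_dotProduct, star_trivial, Matrix.mulVec]
  congr 1
  funext k
  simp [rowMat, covSum, WithLp.ofLp_sum, mul_sum]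

theorem rowMat_mulVec_eq_zero (β : EuclideanSpace ℝ (Fin p)) {u : EuclideanSpace ℝ (Fin p)}
    (hu : ∀ i, ∀ d ∈ altSet T (Y i), ⟪vvec X Y i d, u⟫ = 0) :
    rowMat X Y β *ᵥ WithLp.ofLp u = 0 := by
  ext ⟨i, d, hd⟩
  have hconst : ∀ e ∈ altSet T (Y i), ⟪covSum X i e, u⟫ = ⟪covSum X i (Y i), u⟫ :=
    fun e he => by simpa [vvec_eq_sub, inner_sub_left, sub_eq_zero] using hu i e he
  rw [rowMat_mulVec_apply, inner_sub_left, sum_inner]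
  simp only [real_inner_smul_left]
  rw [sum_congr rfl fun e he => by rw [hconst e he], ← sum_mul, sum_cweight, one_mul,
    hconst d hd, sub_self, Pi.zero_apply]

theorem eq_zero_of_forall_inner_vvec_eq_zero (h1 : Assumption1 X Y)
    {u : EuclideanSpace ℝ (Fin p)} (hu : ∀ i, ∀ d ∈ altSet T (Y i), ⟪vvec X Y i d, u⟫ = 0) :
    u = 0 := by
  have hinj := (rowMat X Y 0).mulVec_injective_of_rank_eq_card (by simpa using h1 0)
  exact WithLp.ofLp_injective 2 (hinj (by rw [rowMat_mulVec_eq_zero X Y 0 hu]; simp))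

theorem inner_vvec_sub_eq_zero_of_negLogL_eq {b b' : EuclideanSpace ℝ (Fin p)}
    (hmin : ∀ β, negLogL X Y b ≤ negLogL X Y β) (h : negLogL X Y b' = negLogL X Y b) :
    ∀ i, ∀ d ∈ altSet T (Y i), ⟪vvec X Y i d, b' - b⟫ = 0 := by
  have hle := fun i (_ : i ∈ univ) =>
    logSumExp_inner_midpoint_le (altSet_nonempty (Y i)) (vvec X Y i) b b'
  have hsum := le_antisymm (sum_le_sum hle) (by
    rw [← sum_div, sum_add_distrib]
    have := hmin ((2⁻¹ : ℝ) • (b + b'))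
    simp only [negLogL] at this h
    linarith)
  intro i d hd
  obtain ⟨c, hc⟩ := exists_inner_sub_eq_const_of_logSumExp_inner_midpoint_eq
    (altSet_nonempty (Y i)) (vvec X Y i) ((sum_eq_sum_iff_of_le hle).1 hsum i (mem_univ i))
  rw [hc d hd, ← hc (Y i) (self_mem_altSet (Y i)), vvec_self, inner_zero_left]

end ConditionalLogit

theorem stmt1_general {n T p : ℕ}
    (X : Fin n → Fin T → EuclideanSpace ℝ (Fin p)) (Y : Fin n → Fin T → Bool)
    (h1 : Assumption1 X Y) (h2 : Assumption2 X Y) :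
    ∃ bhat : EuclideanSpace ℝ (Fin p),
      (∀ β, logL X Y β ≤ logL X Y bhat) ∧
      ∀ btilde : EuclideanSpace ℝ (Fin p),
        logL X Y btilde = logL X Y bhat → btilde = bhat := by
  obtain ⟨bhat, hmin⟩ := exists_forall_negLogL_le X Y h2
  refine ⟨bhat, fun β => ?_, fun btilde h => ?_⟩
  · simpa only [logL_eq_neg_negLogL, neg_le_neg_iff] using hmin β
  · rw [logL_eq_neg_negLogL, logL_eq_neg_negLogL, neg_inj] at h
    exact sub_eq_zero.1 <| eq_zero_of_forall_inner_vvec_eq_zero X Y h1 <|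
      inner_vvec_sub_eq_zero_of_negLogL_eq X Y hmin h

/-- Sufficiency direction of Theorem 1. -/
theorem stmt1 {n T p : ℕ} (hn : 1 ≤ n) (hT : 1 ≤ T) (hp : 1 ≤ p)
    (X : Fin n → Fin T → EuclideanSpace ℝ (Fin p)) (Y : Fin n → Fin T → Bool)
    (h1 : Assumption1 X Y) (h2 : Assumption2 X Y) :
    ∃ bhat : EuclideanSpace ℝ (Fin p),
      (∀ β, logL X Y β ≤ logL X Y bhat) ∧
      ∀ btilde : EuclideanSpace ℝ (Fin p),
        logL X Y btilde = logL X Y bhat → btilde = bhat :=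
  stmt1_general X Y h1 h2
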